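/- arXiv:1208.1647 — 2 statements merged into one kernel-verified Lean document; each statement's English description precedes it below -/
import Mathlib

section
/- For every natural number n and every finite set X of cardinality n + 1, the sum over all set partitions P of X of (|P| − 1)!, where |P| denotes the number of blocks of P, satisfies ∑_{P partition of X} (|P| − 1)! ≤ n! · e^{n+2}. -/
/-!
Group the partitions of `X` by their number `k` of blocks. A partition into `k` blocks together
with a bijection from its blocks to `Fin k` is determined by the induced map `X → Fin k`, so there
are at most `k ^ (n + 1) / k!` such partitions and they contribute at most `k ^ n ≤ n! e^k` to the
sum. Finally `∑_{k ≤ n + 1} e^k ≤ e^{n + 2}` because `e ≥ 2`.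
-/

open Finset Function Real
open scoped Nat

namespace Finpartition

variable {α : Type*} [DecidableEq α] {s : Finset α}

lemma mem_parts_iff_exists_part_eq (P : Finpartition s) {t : Finset α} :
    t ∈ P.parts ↔ ∃ x ∈ s, P.part x = t :=
  ⟨fun ht ↦ P.part_surjOn ht, by rintro ⟨x, hx, rfl⟩; exact P.part_mem.2 hx⟩

lemma ext_part {P Q : Finpartition s} (h : ∀ x ∈ s, P.part x = Q.part x) : P = Q := by
  ext t
  simp only [mem_parts_iff_exists_part_eq]
  exact exists_congr fun x ↦ and_congr_right fun hx ↦ by rw [h x hx]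

lemma card_parts_pos (P : Finpartition s) (hs : s.Nonempty) : 0 < #P.parts :=
  card_pos.2 (P.parts_nonempty hs.ne_empty)

def labelling (P : Finpartition s) {β : Type*} (e : P.parts ≃ β) (x : s) : β :=
  e ⟨P.part x, P.part_mem.2 x.2⟩

lemma labelling_eq_labelling_iff (P : Finpartition s) {β : Type*} (e : P.parts ≃ β) (x y : s) :
    P.labelling e x = P.labelling e y ↔ P.part x = P.part y := by
  simp [labelling, e.injective.eq_iff]

lemma labelling_injective (k : ℕ) :
    Injective fun Pe : Σ P : {P : Finpartition s // #P.parts = k}, P.1.parts ≃ Fin k ↦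
      Pe.1.1.labelling Pe.2 := by
  rintro ⟨⟨P, hP⟩, e⟩ ⟨⟨Q, hQ⟩, e'⟩ h
  simp only at h
  have hpart (x y : s) : P.part x = P.part y ↔ Q.part x = Q.part y := by
    rw [← labelling_eq_labelling_iff P e, ← labelling_eq_labelling_iff Q e', h]
  obtain rfl : P = Q := ext_part fun x hx ↦ by
    ext y
    by_cases hy : y ∈ s
    · rw [P.mem_part_iff_part_eq_part hy hx, Q.mem_part_iff_part_eq_part hy hx]
      exact hpart ⟨y, hy⟩ ⟨x, hx⟩
    · exact iff_of_false (fun h' ↦ hy (P.part_subset x h')) (fun h' ↦ hy (Q.part_subset x h'))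
  obtain rfl : e = e' := Equiv.ext fun ⟨t, ht⟩ ↦ by
    obtain ⟨x, hx, rfl⟩ := P.mem_parts_iff_exists_part_eq.1 ht
    exact congrFun h ⟨x, hx⟩
  rfl

lemma card_filter_card_parts_mul_factorial_le (s : Finset α) (k : ℕ) :
    #{P : Finpartition s | #P.parts = k} * k ! ≤ k ^ #s := by
  have hcard : Fintype.card (Σ P : {P : Finpartition s // #P.parts = k}, P.1.parts ≃ Fin k)
      = #{P : Finpartition s | #P.parts = k} * k ! := by
    rw [Fintype.card_sigma, Fintype.sum_congr _ (fun _ ↦ k !) fun P ↦ ?_, sum_const, card_univ,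
      Fintype.card_subtype, smul_eq_mul]
    rw [Fintype.card_equiv (P.1.parts.equivFin.trans (finCongr P.2)), Fintype.card_coe, P.2]
  simpa [hcard] using Fintype.card_le_of_injective _ (labelling_injective (s := s) k)

theorem sum_factorial_card_parts_pred_le {n : ℕ} (hs : #s = n + 1) :
    ∑ P : Finpartition s, (#P.parts - 1)! ≤ ∑ k ∈ Icc 1 (n + 1), k ^ n := by
  have hmaps (P : Finpartition s) (_ : P ∈ univ) : #P.parts ∈ Icc 1 (n + 1) :=
    mem_Icc.2 ⟨P.card_parts_pos (card_pos.1 (by omega)), hs ▸ P.card_parts_le_card⟩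
  rw [← sum_fiberwise_of_maps_to hmaps]
  refine sum_le_sum fun k hk ↦ ?_
  obtain ⟨k, rfl⟩ := Nat.exists_eq_add_of_le' (mem_Icc.1 hk).1
  have := card_filter_card_parts_mul_factorial_le s (k + 1)
  rw [sum_congr rfl fun P hP ↦ by rw [(mem_filter.1 hP).2], sum_const, smul_eq_mul]
  rw [hs, Nat.factorial_succ, pow_succ] at this
  rw [Nat.add_sub_cancel]
  exact Nat.le_of_mul_le_mul_right (by linarith) k.add_one_pos

end Finpartition

lemma Real.sum_range_exp_le (m : ℕ) : ∑ k ∈ range m, exp k ≤ exp m := by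
  induction m with
  | zero => simp
  | succ m ih =>
    rw [sum_range_succ, Nat.cast_succ, exp_add]
    nlinarith [exp_pos (m : ℝ), exp_one_gt_two]

lemma Real.sum_range_pow_le (n m : ℕ) : ∑ k ∈ range m, (k : ℝ) ^ n ≤ n ! * exp m :=
  calc ∑ k ∈ range m, (k : ℝ) ^ n ≤ ∑ k ∈ range m, n ! * exp k :=
        sum_le_sum fun k _ ↦
          (div_le_iff₀' (by positivity)).1 (pow_div_factorial_le_exp _ k.cast_nonneg n)
    _ ≤ n ! * exp m := by
        rw [← mul_sum]
        exact mul_le_mul_of_nonneg_left (sum_range_exp_le m) (by positivity)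

/-- For a finite set `X` of cardinality `n + 1`, the sum over all set partitions `P`
of `X` of `(|P| − 1)!` is at most `n! · e^{n+2}`. -/
theorem stmt5 {α : Type*} [DecidableEq α] (n : ℕ) (X : Finset α)
    (hX : X.card = n + 1) :
    ∑ P : Finpartition X, ((P.parts.card - 1).factorial : ℝ)
      ≤ (n.factorial : ℝ) * Real.exp (n + 2) :=
  calc ∑ P : Finpartition X, ((#P.parts - 1)! : ℝ)
      ≤ ∑ k ∈ Icc 1 (n + 1), (k : ℝ) ^ n :=
        mod_cast Finpartition.sum_factorial_card_parts_pred_le hX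
    _ ≤ ∑ k ∈ range (n + 2), (k : ℝ) ^ n :=
        sum_le_sum_of_subset_of_nonneg
          (fun k hk ↦ by simp only [mem_Icc, mem_range] at hk ⊢; omega) fun _ _ _ ↦ by positivity
    _ ≤ n ! * exp (n + 2) := mod_cast sum_range_pow_le n (n + 2)
end

section
/- Let R be an associative unital ℚ-algebra, let a, b : ℕ → R be sequences, and suppose b(0) is a unit of R with inverse b(0)⁻¹. For each n ≥ 0 define v(n) := n! · ∑_{k=0}^{n} (−1)^k ∑ (1/(n − m_1 − … − m_k)!) · a(n − m_1 − … − m_k) · b(0)⁻¹ · ∏_{j=1}^{k} ( (1/m_j!) · b(m_j) · b(0)⁻¹ ), where the inner sum runs over all k-tuples (m_1, …, m_k) of positive integers with m_1 + … + m_k ≤ n and the product over j is taken in order of increasing j. Then for every n ≥ 0 the recurrence relation a(n) = ∑_{k=0}^{n} C(n, k) · v(n − k) · b(k) holds, where C(n, k) is the binomial coefficient. -/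
/-!
After dividing by factorials, `α n = a n / n!`, `β ℓ = b ℓ / ℓ!` and `w n = v n / n!`, the
recurrence is the Cauchy convolution `α = w ⋆ β`, i.e. `w` is `α` times the inverse of the
power series `β`. The explicit formula is the Neumann series of that inverse: writing
`β = (1 + (β - b 0) b₀⁻¹) b 0` as power series, the `k`-th term collects the products of
`k` factors `β mⱼ b₀⁻¹` with `mⱼ ≥ 1`. Splitting off the last factor of each tuple gives
`w n = α n b₀⁻¹ - ∑_{ℓ ≥ 1} w (n - ℓ) β ℓ b₀⁻¹`, which is the convolution identity
multiplied on the right by `b₀⁻¹`.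
-/

open Finset

namespace ClusterExpansion

section Compositions

variable {R : Type*} [Semiring R] (f g : ℕ → R)

def boundedCompositions (n k : ℕ) : Finset (Fin k → ℕ) :=
  (Fintype.piFinset fun _ : Fin k => Icc 1 n).filter fun m => ∑ j, m j ≤ n

theorem mem_boundedCompositions {n k : ℕ} {m : Fin k → ℕ} :
    m ∈ boundedCompositions n k ↔ (∀ j, 1 ≤ m j) ∧ ∑ j, m j ≤ n := by
  simp only [boundedCompositions, mem_filter, Fintype.mem_piFinset, mem_Icc]
  refine ⟨fun ⟨hm, hsum⟩ => ⟨fun j => (hm j).1, hsum⟩,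
    fun ⟨hpos, hsum⟩ => ⟨fun j => ?_, hsum⟩⟩
  exact ⟨hpos j, (single_le_sum (fun i _ => (m i).zero_le) (mem_univ j)).trans hsum⟩

theorem boundedCompositions_eq_empty {n k : ℕ} (h : n < k) : boundedCompositions n k = ∅ := by
  refine eq_empty_of_forall_notMem fun m hm => ?_
  obtain ⟨hpos, hsum⟩ := mem_boundedCompositions.1 hm
  have : k ≤ ∑ j, m j := by simpa using sum_le_sum fun j (_ : j ∈ univ) => hpos j
  omega

def compositionSum (n k : ℕ) : R :=
  ∑ m ∈ boundedCompositions n k, f (n - ∑ j, m j) * (List.ofFn fun j => g (m j)).prod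

theorem compositionSum_zero (n : ℕ) : compositionSum f g n 0 = f n := by
  have : boundedCompositions n 0 = {Fin.elim0} := by
    ext m
    simp [mem_boundedCompositions, funext_iff]
  simp [compositionSum, this]

theorem compositionSum_of_lt {n k : ℕ} (h : n < k) : compositionSum f g n k = 0 := by
  rw [compositionSum, boundedCompositions_eq_empty h, sum_empty]

theorem compositionSum_succ (n k : ℕ) :
    compositionSum f g n (k + 1) = ∑ ℓ ∈ Icc 1 n, compositionSum f g (n - ℓ) k * g ℓ := by
  simp only [compositionSum, sum_mul]
  rw [sum_sigma']
  refine sum_nbij' (fun m => ⟨m (Fin.last k), Fin.init m⟩) (fun p => Fin.snoc p.2 p.1)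
    ?_ ?_ (fun m _ => Fin.snoc_init_self m) (fun p _ => by simp [Fin.init_snoc]) ?_
  · intro m hm
    obtain ⟨hpos, hsum⟩ := mem_boundedCompositions.1 hm
    rw [Fin.sum_univ_castSucc] at hsum
    simp only [mem_sigma, mem_Icc, mem_boundedCompositions, Fin.init]
    exact ⟨⟨hpos _, by omega⟩, fun j => hpos _, by omega⟩
  · rintro ⟨ℓ, m⟩ hm
    simp only [mem_sigma, mem_Icc, mem_boundedCompositions] at hm
    obtain ⟨⟨hℓ, hℓn⟩, hpos, hsum⟩ := hm
    refine mem_boundedCompositions.2 ⟨fun j => ?_, ?_⟩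
    · induction j using Fin.lastCases <;> simp [hℓ, hpos]
    · simp only [Fin.sum_univ_castSucc, Fin.snoc_castSucc, Fin.snoc_last]
      omega
  · intro m hm
    have hsum := (mem_boundedCompositions.1 hm).2
    rw [Fin.sum_univ_castSucc] at hsum ⊢
    simp only [Fin.init, List.ofFn_succ', List.prod_concat, mul_assoc]
    congr 2
    omega

end Compositions

section Alternating

variable {R : Type*} [Ring R] (f g : ℕ → R)

def alternatingCompositionSum (n : ℕ) : R :=
  ∑ k ∈ range (n + 1), (-1) ^ k * compositionSum f g n k

theorem alternatingCompositionSum_eq_sum_range {n N : ℕ} (h : n < N) :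
    alternatingCompositionSum f g n = ∑ k ∈ range N, (-1) ^ k * compositionSum f g n k := by
  refine sum_subset (range_subset_range.2 h) fun k _ hk => ?_
  rw [compositionSum_of_lt f g (by simpa using hk), mul_zero]

theorem alternatingCompositionSum_add_sum_mul (n : ℕ) :
    alternatingCompositionSum f g n +
      ∑ ℓ ∈ Icc 1 n, alternatingCompositionSum f g (n - ℓ) * g ℓ = f n := by
  have hsucc : ∑ k ∈ range n, (-1) ^ (k + 1) * compositionSum f g n (k + 1) =
      -∑ ℓ ∈ Icc 1 n, alternatingCompositionSum f g (n - ℓ) * g ℓ := by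
    simp only [compositionSum_succ, mul_sum, pow_succ, mul_neg_one, neg_mul, sum_neg_distrib]
    rw [sum_comm]
    refine congrArg _ (sum_congr rfl fun ℓ hℓ => ?_)
    rw [alternatingCompositionSum_eq_sum_range f g (by grind : n - ℓ < n), sum_mul]
    simp only [mul_assoc]
  rw [alternatingCompositionSum, sum_range_succ', hsucc, pow_zero, one_mul,
    compositionSum_zero]
  abel

theorem sum_range_alternatingCompositionSum_mul {α β : ℕ → R} {binv : R}
    (hβ : binv * β 0 = 1) (n : ℕ) :
    ∑ ℓ ∈ range (n + 1),
      alternatingCompositionSum (α · * binv) (β · * binv) (n - ℓ) * β ℓ = α n := by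
  have key :=
    congrArg (· * β 0) (alternatingCompositionSum_add_sum_mul (α · * binv) (β · * binv) n)
  simp only [add_mul, sum_mul, mul_assoc, hβ, mul_one] at key
  rw [range_eq_Ico, sum_eq_sum_Ico_succ_bot (by omega : 0 < n + 1), zero_add,
    Ico_add_one_right_eq_Icc, Nat.sub_zero]
  exact key

end Alternating

end ClusterExpansion

open ClusterExpansion

theorem stmt7_general {R : Type*} [Ring R] [Algebra ℚ R] (a b : ℕ → R) (binv : R)
    (hb' : binv * b 0 = 1) (v : ℕ → R)
    (hv : ∀ n, v n = (n.factorial : ℚ) •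
      ∑ k ∈ Finset.range (n + 1), (-1 : R) ^ k *
        ∑ m ∈ (Fintype.piFinset fun _ : Fin k => Finset.Icc 1 n).filter
            (fun m : Fin k → ℕ => ∑ j, m j ≤ n),
          (((n - ∑ j, m j).factorial : ℚ)⁻¹) •
            (a (n - ∑ j, m j) * binv *
              (List.ofFn fun j : Fin k =>
                (((m j).factorial : ℚ)⁻¹) • (b (m j) * binv)).prod)) :
    ∀ n, a n = ∑ k ∈ Finset.range (n + 1), (n.choose k : ℚ) • (v (n - k) * b k) := by
  intro n
  set α : ℕ → R := fun j => (j.factorial : ℚ)⁻¹ • a j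
  set β : ℕ → R := fun j => (j.factorial : ℚ)⁻¹ • b j
  set w := alternatingCompositionSum (α · * binv) (β · * binv)
  have hvw : ∀ m, v m = (m.factorial : ℚ) • w m := by
    intro m
    simp only [hv, w, alternatingCompositionSum, compositionSum, boundedCompositions, α, β,
      smul_mul_assoc]
  have hconv : ∑ k ∈ range (n + 1), w (n - k) * β k = α n :=
    sum_range_alternatingCompositionSum_mul (by simpa [β] using hb') n
  have hterm : ∀ k ∈ range (n + 1),
      (n.choose k : ℚ) • (v (n - k) * b k) = (n.factorial : ℚ) • (w (n - k) * β k) := by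
    intro k hk
    rw [hvw, smul_mul_assoc, smul_smul, mul_smul_comm, smul_smul]
    congr 1
    rw [Nat.cast_choose ℚ (Nat.lt_succ_iff.1 (mem_range.1 hk))]
    field_simp
  rw [sum_congr rfl hterm, ← smul_sum, hconv, smul_smul, mul_inv_cancel₀ (by positivity),
    one_smul]

/-- Abstract noncommutative form of the kinetic cluster expansions: if
`v(n) = n! ∑_{k=0}^{n} (−1)^k ∑_{m₁+⋯+m_k ≤ n, mⱼ ≥ 1}
  (1/(n−m₁−⋯−m_k)!) a(n−m₁−⋯−m_k) b(0)⁻¹ ∏_{j=1}^{k} ((1/mⱼ!) b(mⱼ) b(0)⁻¹)`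
(product taken in order of increasing `j`), then the recurrence relations
`a(n) = ∑_{k=0}^{n} C(n,k) v(n−k) b(k)` hold. -/
theorem stmt7 {R : Type*} [Ring R] [Algebra ℚ R] (a b : ℕ → R) (binv : R)
    (hb : b 0 * binv = 1) (hb' : binv * b 0 = 1) (v : ℕ → R)
    (hv : ∀ n, v n = (n.factorial : ℚ) •
      ∑ k ∈ Finset.range (n + 1), (-1 : R) ^ k *
        ∑ m ∈ (Fintype.piFinset fun _ : Fin k => Finset.Icc 1 n).filter
            (fun m : Fin k → ℕ => ∑ j, m j ≤ n),
          (((n - ∑ j, m j).factorial : ℚ)⁻¹) •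
            (a (n - ∑ j, m j) * binv *
              (List.ofFn fun j : Fin k =>
                (((m j).factorial : ℚ)⁻¹) • (b (m j) * binv)).prod)) :
    ∀ n, a n = ∑ k ∈ Finset.range (n + 1), (n.choose k : ℚ) • (v (n - k) * b k) :=
  stmt7_general a b binv hb' v hv
end
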